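/- Let p be a prime with p ∉ {2, 3, 5}. Then 8 divides the number of points of the reduction of E₂ modulo p, i.e. 8 ∣ #E₂(𝔽_p). -/

import Mathlib

/-! The point `P = (0, 1)` of `E₂` has order 4, with `2P = (1, -1)`, and `T = (-3, 1)` is a
2-torsion point different from `2P`; this holds over every field of characteristic other than
2, 3 and 5 (where these points are nonsingular and distinct). Hence `T` has order 2 in
`E₂ / ⟨P⟩`, and Lagrange's theorem gives `4 · 2 ∣ #E₂`. -/

/-- The reduction modulo `p` of the elliptic curve
`E₂ : y² + xy + y = x³ + x² − 5x + 2` (Cremona label 15A3), i.e. the Weierstrass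
curve over `𝔽_p = ZMod p` with coefficients `a₁ = 1`, `a₂ = 1`, `a₃ = 1`, `a₄ = −5`,
`a₆ = 2`. -/
def E₂mod (p : ℕ) : WeierstrassCurve.Affine (ZMod p) :=
  { a₁ := 1, a₂ := 1, a₃ := 1, a₄ := -5, a₆ := 2 }

lemma notMem_zmultiples_of_addOrderOf_eq_four {G : Type*} [AddGroup G] {a b : G}
    (ha : addOrderOf a = 4) (hb : 2 • b = 0) (hb0 : b ≠ 0) (hab : b ≠ 2 • a) :
    b ∉ AddSubgroup.zmultiples a := by
  rintro ⟨k, rfl : k • a = b⟩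
  have h4 : ((4 : ℕ) : ℤ) ∣ 2 * k := by
    rw [← ha, addOrderOf_dvd_iff_zsmul_eq_zero, mul_zsmul]
    exact_mod_cast hb
  rw [← mod_addOrderOf_zsmul, ha, Nat.cast_ofNat] at hb0 hab
  obtain hk | hk : k % 4 = 0 ∨ k % 4 = 2 := by omega
  · exact hb0 (by simp [hk])
  · exact hab (by rw [hk, ofNat_zsmul])

theorem eight_dvd_natCard_of_addOrderOf_eq_four {G : Type*} [AddCommGroup G] {a b : G}
    (ha : addOrderOf a = 4) (hb : addOrderOf b = 2) (hab : b ≠ 2 • a) :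
    8 ∣ Nat.card G := by
  set H := AddSubgroup.zmultiples a
  have hbH : b ∉ H := notMem_zmultiples_of_addOrderOf_eq_four ha
    (hb ▸ addOrderOf_nsmul_eq_zero b) (by rintro rfl; simp at hb) hab
  have hb' : addOrderOf (b : G ⧸ H) = 2 := by
    refine addOrderOf_eq_prime ?_ ?_
    · rw [← QuotientAddGroup.mk_nsmul, ← hb, addOrderOf_nsmul_eq_zero, QuotientAddGroup.mk_zero]
    · rwa [Ne, QuotientAddGroup.eq_zero_iff]
  calc 8 = 2 * 4 := rfl
    _ ∣ Nat.card (G ⧸ H) * Nat.card H := by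
      rw [← hb', Nat.card_zmultiples, ha]
      exact mul_dvd_mul_right (addOrderOf_dvd_natCard _) 4
    _ = Nat.card G := (AddSubgroup.card_eq_card_quotient_mul_card_addSubgroup H).symm

open WeierstrassCurve.Affine

def E₂ (F : Type*) [CommRing F] : WeierstrassCurve.Affine F :=
  { a₁ := 1, a₂ := 1, a₃ := 1, a₄ := -5, a₆ := 2 }

namespace E₂

variable {F : Type*} [Field F]

lemma nonsingular_zero_one (h3 : (3 : F) ≠ 0) : (E₂ F).Nonsingular 0 1 := by
  rw [nonsingular_iff', equation_iff']
  refine ⟨by simp only [E₂]; ring, Or.inr (ne_of_eq_of_ne ?_ h3)⟩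
  simp only [E₂]; ring

lemma nonsingular_one_neg_one : (E₂ F).Nonsingular 1 (-1) := by
  rw [nonsingular_iff', equation_iff']
  refine ⟨by simp only [E₂]; ring, Or.inl (ne_of_eq_of_ne ?_ (neg_ne_zero.2 one_ne_zero))⟩
  simp only [E₂]; ring

lemma nonsingular_neg_three_one (h3 : (3 : F) ≠ 0) (h5 : (5 : F) ≠ 0) :
    (E₂ F).Nonsingular (-3) 1 := by
  rw [nonsingular_iff', equation_iff']
  refine ⟨by simp only [E₂]; ring,
    Or.inl (ne_of_eq_of_ne ?_ (neg_ne_zero.2 (mul_ne_zero h3 h5)))⟩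
  simp only [E₂]; ring

variable [DecidableEq F]

lemma two_nsmul_zero_one (h3 : (3 : F) ≠ 0) :
    2 • Point.some _ _ (nonsingular_zero_one h3) = Point.some _ _ nonsingular_one_neg_one := by
  have hy : (1 : F) ≠ (E₂ F).negY 0 1 := by
    rw [← sub_ne_zero]
    exact ne_of_eq_of_ne (by simp only [negY, E₂]; ring) h3
  have hslope : (E₂ F).slope 0 0 1 1 = -2 := by
    rw [slope_of_Y_ne rfl hy, div_eq_iff (sub_ne_zero.mpr hy)]
    simp only [negY, E₂]; ring
  rw [two_nsmul, Point.add_self_of_Y_ne hy]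
  congr 1
  · rw [hslope]; simp only [addX, E₂]; ring
  · rw [hslope]; simp only [addY, negAddY, addX, negY, E₂]; ring

lemma two_nsmul_one_neg_one : 2 • Point.some _ _ (nonsingular_one_neg_one (F := F)) = 0 := by
  rw [two_nsmul]
  exact Point.add_self_of_Y_eq (by simp only [negY, E₂]; ring)

lemma two_nsmul_neg_three_one (h3 : (3 : F) ≠ 0) (h5 : (5 : F) ≠ 0) :
    2 • Point.some _ _ (nonsingular_neg_three_one h3 h5) = 0 := by
  rw [two_nsmul]
  exact Point.add_self_of_Y_eq (by simp only [negY, E₂]; ring)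

lemma addOrderOf_zero_one (h3 : (3 : F) ≠ 0) :
    addOrderOf (Point.some _ _ (nonsingular_zero_one h3)) = 4 := by
  refine addOrderOf_eq_prime_pow (p := 2) (n := 1) ?_ ?_
  · rw [pow_one, two_nsmul_zero_one h3]
    exact Point.some_ne_zero _
  · rw [show 2 ^ (1 + 1) = 2 * 2 from rfl, mul_nsmul, two_nsmul_zero_one h3,
      two_nsmul_one_neg_one]

lemma addOrderOf_neg_three_one (h3 : (3 : F) ≠ 0) (h5 : (5 : F) ≠ 0) :
    addOrderOf (Point.some _ _ (nonsingular_neg_three_one h3 h5)) = 2 :=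
  addOrderOf_eq_prime (two_nsmul_neg_three_one h3 h5) (Point.some_ne_zero _)

lemma some_neg_three_one_ne_two_nsmul_zero_one (h2 : (2 : F) ≠ 0) (h3 : (3 : F) ≠ 0)
    (h5 : (5 : F) ≠ 0) : Point.some _ _ (nonsingular_neg_three_one h3 h5) ≠
      2 • Point.some _ _ (nonsingular_zero_one h3) := by
  rw [two_nsmul_zero_one h3]
  intro h
  injection h with hx
  exact mul_ne_zero h2 h2 (by linear_combination -hx)

theorem eight_dvd_natCard_point (h2 : (2 : F) ≠ 0) (h3 : (3 : F) ≠ 0) (h5 : (5 : F) ≠ 0) :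
    8 ∣ Nat.card (E₂ F).Point :=
  eight_dvd_natCard_of_addOrderOf_eq_four (addOrderOf_zero_one h3)
    (addOrderOf_neg_three_one h3 h5) (some_neg_three_one_ne_two_nsmul_zero_one h2 h3 h5)

end E₂

/-- For any prime `p ∉ {2, 3, 5}`, `8` divides the number of points of the reduction
of `E₂` modulo `p`. -/
theorem eight_dvd_card_E₂_mod_p (p : ℕ) (hp : p.Prime) (hp2 : p ≠ 2) (hp3 : p ≠ 3)
    (hp5 : p ≠ 5) : 8 ∣ Nat.card (E₂mod p).Point := by
  have : Fact p.Prime := ⟨hp⟩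
  have : Fact (Nat.Prime 5) := ⟨Nat.prime_five⟩
  have h2 : (2 : ZMod p) ≠ 0 := by exact_mod_cast ZMod.prime_ne_zero p 2 hp2
  have h3 : (3 : ZMod p) ≠ 0 := by exact_mod_cast ZMod.prime_ne_zero p 3 hp3
  have h5 : (5 : ZMod p) ≠ 0 := by exact_mod_cast ZMod.prime_ne_zero p 5 hp5
  -- `E₂mod p` unfolds to `E₂ (ZMod p)`.
  exact E₂.eight_dvd_natCard_point h2 h3 h5
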